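/- arXiv:1812.11782 — 3 statements merged into one kernel-verified Lean document; each statement's English description precedes it below -/
import Mathlib

section
/- Let A ∈ ℝ^{n×m}, f ∈ ℝ^n, w > 0, μ > 0 componentwise, and suppose f is in the range of A. Then sup_{u ∈ ℝⁿ} { fᵀu − (1/2) uᵀ S(μ) u } = inf { (1/2) Σ_e ζ_e² μ_e w_e : A·diag(μ)·ζ = f, ζ ∈ ℝ^m }, where S(μ) = A diag(μ) W⁻¹ Aᵀ. -/
open Matrix

lemma core {n m : ℕ} (B : Matrix (Fin n) (Fin m) ℝ) (v : Fin m → ℝ) :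
    ∃ u, (B * Bᵀ).mulVec u = B.mulVec v := by
  have hle : LinearMap.range (B * Bᵀ).mulVecLin ≤ LinearMap.range B.mulVecLin := by
    rw [Matrix.mulVecLin_mul]
    exact LinearMap.range_comp_le_range _ _
  have heq : LinearMap.range (B * Bᵀ).mulVecLin = LinearMap.range B.mulVecLin :=
    Submodule.eq_of_le_of_finrank_eq hle B.rank_self_mul_transpose
  have : B.mulVec v ∈ LinearMap.range (B * Bᵀ).mulVecLin := by
    rw [heq]; exact ⟨v, rfl⟩
  exact this

/-- Legendre duality: sup_u { fᵀu − (1/2)uᵀS(μ)u } = inf over feasible fluxes of the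
weighted quadratic energy, for f ∈ Range(A), w > 0, μ > 0. -/
theorem stmt_4 {n m : ℕ} (A : Matrix (Fin n) (Fin m) ℝ) (w μ : Fin m → ℝ)
    (f : Fin n → ℝ) (hw : ∀ e, 0 < w e) (hμ : ∀ e, 0 < μ e)
    (hf : ∃ v, A.mulVec v = f) :
    sSup {x : ℝ | ∃ u : Fin n → ℝ,
        x = f ⬝ᵥ u - (1 / 2) * (u ⬝ᵥ (A * Matrix.diagonal μ *
          (Matrix.diagonal w)⁻¹ * Aᵀ).mulVec u)} =
      sInf {x : ℝ | ∃ ζ : Fin m → ℝ,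
        A.mulVec (fun e => μ e * ζ e) = f ∧
        x = (1 / 2) * ∑ e, (ζ e) ^ 2 * μ e * w e} := by
  obtain ⟨v, hv⟩ := hf
  set g : Fin m → ℝ := fun e => Real.sqrt (μ e / w e) with hg
  have hgpos : ∀ e, 0 < g e := fun e => Real.sqrt_pos.2 (div_pos (hμ e) (hw e))
  have hgg : ∀ e, g e * g e = μ e * (w e)⁻¹ := by
    intro e
    rw [hg]
    rw [Real.mul_self_sqrt (le_of_lt (div_pos (hμ e) (hw e))), div_eq_mul_inv]
  set B : Matrix (Fin n) (Fin m) ℝ := A * Matrix.diagonal g with hB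
  have hwinv : (Matrix.diagonal w)⁻¹ = Matrix.diagonal (fun e => (w e)⁻¹) := by
    apply Matrix.inv_eq_right_inv
    rw [Matrix.diagonal_mul_diagonal]
    rw [show (fun e => w e * (w e)⁻¹) = fun _ => (1:ℝ) from funext fun e => mul_inv_cancel₀ (hw e).ne']
    exact Matrix.diagonal_one
  set S : Matrix (Fin n) (Fin n) ℝ :=
    A * Matrix.diagonal μ * (Matrix.diagonal w)⁻¹ * Aᵀ with hS
  have hdiagV : ∀ (d x : Fin m → ℝ), (Matrix.diagonal d).mulVec x = fun e => d e * x e :=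
    fun d x => funext fun e => Matrix.mulVec_diagonal d x e
  have hSB : S = B * Bᵀ := by
    have hDD : Matrix.diagonal μ * Matrix.diagonal (fun e => (w e)⁻¹)
        = Matrix.diagonal g * Matrix.diagonal g := by
      rw [Matrix.diagonal_mul_diagonal, Matrix.diagonal_mul_diagonal]
      exact congrArg Matrix.diagonal (funext hgg).symm
    rw [hS, hB, hwinv, Matrix.transpose_mul, Matrix.diagonal_transpose]
    simp only [← Matrix.mul_assoc]
    congr 1
    rw [Matrix.mul_assoc A, Matrix.mul_assoc A, hDD]
  have hfB : B.mulVec (fun e => v e / g e) = f := by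
    rw [hB, ← Matrix.mulVec_mulVec, hdiagV]
    rw [show (fun e => g e * (v e / g e)) = v from
      funext fun e => mul_div_cancel₀ (v e) (hgpos e).ne']
    exact hv
  obtain ⟨u₀, hu₀⟩ := core B (fun e => v e / g e)
  rw [hfB] at hu₀
  rw [← hSB] at hu₀
  have hSsym : Sᵀ = S := by
    rw [hSB, Matrix.transpose_mul, Matrix.transpose_transpose]
  have hsym : ∀ x y : Fin n → ℝ, x ⬝ᵥ S.mulVec y = y ⬝ᵥ S.mulVec x := by
    intro x y
    rw [Matrix.dotProduct_mulVec, ← Matrix.mulVec_transpose, hSsym, dotProduct_comm]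
  have hpos : ∀ x : Fin n → ℝ, 0 ≤ x ⬝ᵥ S.mulVec x := by
    intro x
    rw [hSB, ← Matrix.mulVec_mulVec, Matrix.dotProduct_mulVec, ← Matrix.mulVec_transpose]
    exact Finset.sum_nonneg fun i _ => mul_self_nonneg _
  set c : ℝ := (1/2) * (f ⬝ᵥ u₀) with hc
  have hfu₀ : u₀ ⬝ᵥ S.mulVec u₀ = f ⬝ᵥ u₀ := by
    rw [hu₀, dotProduct_comm]
  have hgreat : IsGreatest {x : ℝ | ∃ u : Fin n → ℝ,
      x = f ⬝ᵥ u - (1 / 2) * (u ⬝ᵥ S.mulVec u)} c := by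
    constructor
    · exact ⟨u₀, by rw [hfu₀, hc]; ring⟩
    · rintro x ⟨u, rfl⟩
      have h0 : 0 ≤ (u - u₀) ⬝ᵥ S.mulVec (u - u₀) := hpos _
      have hexp : (u - u₀) ⬝ᵥ S.mulVec (u - u₀)
          = u ⬝ᵥ S.mulVec u - 2 * (f ⬝ᵥ u) + f ⬝ᵥ u₀ := by
        rw [Matrix.mulVec_sub, hu₀, dotProduct_sub, sub_dotProduct,
          sub_dotProduct, hsym u₀ u, hu₀]
        rw [dotProduct_comm u f, dotProduct_comm u₀ f]
        ring
      rw [hexp] at h0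
      rw [hc]; linarith
  set q : Fin m → ℝ := Aᵀ.mulVec u₀ with hq
  have hSu : ∀ x : Fin n → ℝ,
      S.mulVec x = A.mulVec (fun e => μ e * ((w e)⁻¹ * (Aᵀ.mulVec x) e)) := by
    intro x
    rw [hS, hwinv, ← Matrix.mulVec_mulVec, ← Matrix.mulVec_mulVec, ← Matrix.mulVec_mulVec,
      hdiagV, hdiagV]
  have hdot : ∀ ζ : Fin m → ℝ, A.mulVec (fun e => μ e * ζ e) = f →
      ∑ e, ζ e * q e * μ e = f ⬝ᵥ u₀ := by
    intro ζ hζ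
    have h1 : (fun e => μ e * ζ e) ⬝ᵥ q = f ⬝ᵥ u₀ := by
      rw [hq, Matrix.dotProduct_mulVec, ← Matrix.mulVec_transpose, Matrix.transpose_transpose,
        hζ]
      try exact dotProduct_comm _ _
    rw [← h1]
    unfold dotProduct
    exact Finset.sum_congr rfl fun e _ => by ring
  set ζ₀ : Fin m → ℝ := fun e => q e / w e with hζ₀
  have hfeas : A.mulVec (fun e => μ e * ζ₀ e) = f := by
    rw [show (fun e => μ e * ζ₀ e) = (fun e => μ e * ((w e)⁻¹ * (Aᵀ.mulVec u₀) e)) from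
      funext fun e => by
        rw [hζ₀, hq]
        have hwe : w e ≠ 0 := (hw e).ne'
        field_simp, ← hSu, hu₀]
  have hE0 : ∑ e, (ζ₀ e)^2 * μ e * w e = f ⬝ᵥ u₀ := by
    rw [← hdot ζ₀ hfeas]
    apply Finset.sum_congr rfl
    intro e _
    have hwe : w e ≠ 0 := (hw e).ne'
    rw [hζ₀]
    field_simp
    try ring
  have hleast : IsLeast {x : ℝ | ∃ ζ : Fin m → ℝ,
      A.mulVec (fun e => μ e * ζ e) = f ∧
      x = (1 / 2) * ∑ e, (ζ e) ^ 2 * μ e * w e} c := by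
    constructor
    · exact ⟨ζ₀, hfeas, by rw [hE0, hc]⟩
    · rintro x ⟨ζ, hζ, rfl⟩
      have h0 : 0 ≤ ∑ e, (ζ e - ζ₀ e)^2 * μ e * w e :=
        Finset.sum_nonneg fun e _ => by
          have := (hμ e).le
          have := (hw e).le
          positivity
      have hcross : ∑ e, ζ e * ζ₀ e * μ e * w e = f ⬝ᵥ u₀ := by
        rw [← hdot ζ hζ]
        apply Finset.sum_congr rfl
        intro e _
        have hwe : w e ≠ 0 := (hw e).ne'
        rw [hζ₀]
        field_simp
        try ring
      have hexp : ∑ e, (ζ e - ζ₀ e)^2 * μ e * w e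
          = ∑ e, (ζ e)^2 * μ e * w e - 2 * ∑ e, ζ e * ζ₀ e * μ e * w e
            + ∑ e, (ζ₀ e)^2 * μ e * w e := by
        rw [Finset.mul_sum, ← Finset.sum_sub_distrib, ← Finset.sum_add_distrib]
        exact Finset.sum_congr rfl fun e _ => by ring
      rw [hexp, hcross, hE0] at h0
      rw [hc]; linarith
  rw [hgreat.csSup_eq, hleast.csInf_eq]
end

section
/- Under the hypotheses of the Lyapunov derivative formula, dE(μ(t))/dt = −(1/2)·u(t)ᵀ·S(μ'(t))·u(t), where S(ν) = A diag(ν) W⁻¹ Aᵀ and E(μ(t)) = (1/2)u(t)ᵀS(μ(t))u(t) with S(μ(t))u(t) = f for all t. -/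
/-!
Write `S(ν) = A diag(ν) W⁻¹ Aᵀ`, a symmetric matrix depending linearly on `ν`. Differentiating the
constraint `S(μ) u = f` gives `S(μ') u + S(μ) u' = 0`, while the product rule and the symmetry of
`S(μ)` give `d/dt (uᵀ S(μ) u) = uᵀ S(μ') u + 2 uᵀ S(μ) u'`; substituting the first identity into
the second yields `-uᵀ S(μ') u`.
-/

open Matrix Filter Topology

section

variable {l m n : Type*} {t : ℝ}

theorem HasDerivAt.dotProduct [Fintype n] {x y : ℝ → n → ℝ} {x' y' : n → ℝ}
    (hx : HasDerivAt x x' t) (hy : HasDerivAt y y' t) :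
    HasDerivAt (fun s => x s ⬝ᵥ y s) (x' ⬝ᵥ y t + x t ⬝ᵥ y') t := by
  rw [hasDerivAt_pi] at hx hy
  show HasDerivAt (fun s => ∑ i, x s i * y s i) (∑ i, x' i * y t i + ∑ i, x t i * y' i) t
  rw [← Finset.sum_add_distrib]
  exact HasDerivAt.fun_sum fun i _ => (hx i).mul (hy i)

theorem hasDerivAt_mulVec [Fintype m] {M : ℝ → Matrix n m ℝ} {M' : Matrix n m ℝ}
    {x : ℝ → m → ℝ} {x' : m → ℝ} (hM : ∀ i j, HasDerivAt (fun s => M s i j) (M' i j) t)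
    (hx : HasDerivAt x x' t) :
    HasDerivAt (fun s => M s *ᵥ x s) (M' *ᵥ x t + M t *ᵥ x') t :=
  hasDerivAt_pi.2 fun i => (hasDerivAt_pi.2 (hM i)).dotProduct hx

theorem hasDerivAt_mul_diagonal_mul_apply [Fintype m] [DecidableEq m] (A : Matrix n m ℝ)
    (B : Matrix m l ℝ) {ν : ℝ → m → ℝ} {ν' : m → ℝ} (hν : HasDerivAt ν ν' t) (i : n) (j : l) :
    HasDerivAt (fun s => (A * diagonal (ν s) * B) i j) ((A * diagonal ν' * B) i j) t := by
  rw [hasDerivAt_pi] at hν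
  simp only [mul_apply, diagonal_apply, mul_ite, mul_zero, Finset.sum_ite_eq',
    Finset.mem_univ, if_true]
  exact HasDerivAt.fun_sum fun k _ => ((hν k).const_mul (A i k)).mul_const (B k j)

theorem isSymm_mul_diagonal_mul_diagonal_mul_transpose {R : Type*} [CommSemiring R]
    [Fintype m] [DecidableEq m] (A : Matrix n m R) (ν d : m → R) :
    (A * diagonal ν * diagonal d * Aᵀ).IsSymm := by
  simp [IsSymm, transpose_mul, Matrix.mul_assoc]

theorem hasDerivAt_half_dotProduct_mulVec_of_eventually_mulVec_eq [Fintype n]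
    {S : ℝ → Matrix n n ℝ} {S' : Matrix n n ℝ} {u : ℝ → n → ℝ} {u' : n → ℝ}
    (hsymm : (S t).IsSymm) (hS : ∀ i j, HasDerivAt (fun s => S s i j) (S' i j) t)
    (hu : HasDerivAt u u' t) (hconst : ∀ᶠ s in 𝓝[≥] t, S s *ᵥ u s = S t *ᵥ u t) :
    HasDerivAt (fun s => 1 / 2 * (u s ⬝ᵥ S s *ᵥ u s)) (-(1 / 2) * (u t ⬝ᵥ S' *ᵥ u t)) t := by
  have hSu := hasDerivAt_mulVec hS hu
  have hSu' : S t *ᵥ u' = -(S' *ᵥ u t) := by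
    -- `t` may be a left endpoint, so the constraint is only differentiated from the right.
    have h0 : S' *ᵥ u t + S t *ᵥ u' = 0 :=
      (uniqueDiffWithinAt_Ici t).eq_deriv _ hSu.hasDerivWithinAt
        ((hasDerivWithinAt_const t _ _).congr_of_eventuallyEq hconst rfl)
    linear_combination h0
  have hcomm : u' ⬝ᵥ S t *ᵥ u t = u t ⬝ᵥ S t *ᵥ u' := by
    rw [← dotProduct_transpose_mulVec, hsymm.eq]
  refine ((hu.dotProduct hSu).const_mul (1 / 2)).congr_deriv ?_
  rw [hSu', add_neg_cancel, dotProduct_zero, add_zero, hcomm, hSu', dotProduct_neg]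
  ring

end

theorem stmt_9_general {n m : ℕ} (A : Matrix (Fin n) (Fin m) ℝ) (w : Fin m → ℝ)
    (f : Fin n → ℝ)
    (T : ℝ) (μ μ' : ℝ → Fin m → ℝ) (u u' : ℝ → Fin n → ℝ)
    (hμdiff : ∀ t ∈ Set.Ico (0 : ℝ) T, ∀ e,
      HasDerivAt (fun s => μ s e) (μ' t e) t)
    (hudiff : ∀ t ∈ Set.Ico (0 : ℝ) T, ∀ i,
      HasDerivAt (fun s => u s i) (u' t i) t)
    (hcons : ∀ t ∈ Set.Ico (0 : ℝ) T,
      (A * Matrix.diagonal (μ t) * (Matrix.diagonal w)⁻¹ * Aᵀ).mulVec (u t) = f) :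
    ∀ t ∈ Set.Ico (0 : ℝ) T,
      HasDerivAt
        (fun s => (1 / 2) * (u s ⬝ᵥ (A * Matrix.diagonal (μ s) *
            (Matrix.diagonal w)⁻¹ * Aᵀ).mulVec (u s)))
        (-(1 / 2) * (u t ⬝ᵥ (A * Matrix.diagonal (μ' t) *
            (Matrix.diagonal w)⁻¹ * Aᵀ).mulVec (u t))) t := by
  intro t ht
  refine hasDerivAt_half_dotProduct_mulVec_of_eventually_mulVec_eq ?_ (fun i j => ?_)
    (hasDerivAt_pi.2 (hudiff t ht)) ?_
  · rw [inv_diagonal]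
    exact isSymm_mul_diagonal_mul_diagonal_mul_transpose A (μ t) _
  · simpa only [Matrix.mul_assoc] using
      hasDerivAt_mul_diagonal_mul_apply A _ (hasDerivAt_pi.2 (hμdiff t ht)) i j
  · filter_upwards [Ico_mem_nhdsGE ht.2] with s hs
    rw [hcons s ⟨ht.1.trans hs.1, hs.2⟩, hcons t ht]

/-- dE(μ(t))/dt = −(1/2) u(t)ᵀ S(μ'(t)) u(t) when S(μ(t))u(t) = f for all t. -/
theorem stmt_9 {n m : ℕ} (A : Matrix (Fin n) (Fin m) ℝ) (w : Fin m → ℝ)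
    (f : Fin n → ℝ) (hw : ∀ e, 0 < w e)
    (T : ℝ) (μ μ' : ℝ → Fin m → ℝ) (u u' : ℝ → Fin n → ℝ)
    (hpos : ∀ t ∈ Set.Ico (0 : ℝ) T, ∀ e, 0 < μ t e)
    (hμdiff : ∀ t ∈ Set.Ico (0 : ℝ) T, ∀ e,
      HasDerivAt (fun s => μ s e) (μ' t e) t)
    (hudiff : ∀ t ∈ Set.Ico (0 : ℝ) T, ∀ i,
      HasDerivAt (fun s => u s i) (u' t i) t)
    (hcons : ∀ t ∈ Set.Ico (0 : ℝ) T,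
      (A * Matrix.diagonal (μ t) * (Matrix.diagonal w)⁻¹ * Aᵀ).mulVec (u t) = f) :
    ∀ t ∈ Set.Ico (0 : ℝ) T,
      HasDerivAt
        (fun s => (1 / 2) * (u s ⬝ᵥ (A * Matrix.diagonal (μ s) *
            (Matrix.diagonal w)⁻¹ * Aᵀ).mulVec (u s)))
        (-(1 / 2) * (u t ⬝ᵥ (A * Matrix.diagonal (μ' t) *
            (Matrix.diagonal w)⁻¹ * Aᵀ).mulVec (u t))) t :=
  stmt_9_general A w f T μ μ' u u' hμdiff hudiff hcons
end

section
/- Let v* be optimal for min { Σ_e |v_e| w_e : A v = f } and set μ*_e = |v*_e|. Then L(μ*) = Σ_e |v*_e| w_e, i.e., with ξ_e = sign(v*_e) one has A diag(μ*) ξ = f and (1/2)Σ_e ξ_e² μ*_e w_e + (1/2)Σ_e μ*_e w_e = Σ_e |v*_e| w_e; consequently μ* is a minimizer of L over nonnegative μ. -/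
open Matrix

/-- For v* optimal in the weighted basis pursuit problem and μ*_e = |v*_e|:
with ξ = sign(v*), A diag(μ*) ξ = f, the value of the flux form of L at (μ*, ξ)
equals Σ|v*_e|w_e, and μ* minimizes L over nonnegative feasible μ. -/
theorem stmt_14 {n m : ℕ} (A : Matrix (Fin n) (Fin m) ℝ) (w : Fin m → ℝ)
    (f : Fin n → ℝ) (hw : ∀ e, 0 < w e)
    (L : (Fin m → ℝ) → ℝ)
    (hLdef : ∀ μ, L μ =
      sInf {x : ℝ | ∃ ξ : Fin m → ℝ, A.mulVec (fun e => μ e * ξ e) = f ∧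
        x = (1 / 2) * ∑ e, (ξ e) ^ 2 * μ e * w e} + (1 / 2) * ∑ e, μ e * w e)
    (vstar : Fin m → ℝ) (hfeas : A.mulVec vstar = f)
    (hopt : ∀ v : Fin m → ℝ, A.mulVec v = f →
      ∑ e, |vstar e| * w e ≤ ∑ e, |v e| * w e) :
    A.mulVec (fun e => |vstar e| * Real.sign (vstar e)) = f ∧
    (1 / 2) * ∑ e, (Real.sign (vstar e)) ^ 2 * |vstar e| * w e
      + (1 / 2) * ∑ e, |vstar e| * w e = ∑ e, |vstar e| * w e ∧
    L (fun e => |vstar e|) = ∑ e, |vstar e| * w e ∧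
    ∀ μ : Fin m → ℝ, (∀ e, 0 ≤ μ e) →
      (∃ ξ : Fin m → ℝ, A.mulVec (fun e => μ e * ξ e) = f) →
      L (fun e => |vstar e|) ≤ L μ := by
  have habs : (fun e => |vstar e| * Real.sign (vstar e)) = vstar := by
    funext e
    rcases lt_trichotomy (vstar e) 0 with h | h | h
    · rw [Real.sign_of_neg h, abs_of_neg h]; ring
    · simp [h]
    · rw [Real.sign_of_pos h, abs_of_pos h]; ring
  have hsq : ∀ e, (Real.sign (vstar e)) ^ 2 * |vstar e| = |vstar e| := by
    intro e
    rcases lt_trichotomy (vstar e) 0 with h | h | h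
    · rw [Real.sign_of_neg h]; ring
    · simp [h]
    · rw [Real.sign_of_pos h]; ring
  have hfeas' : A.mulVec (fun e => |vstar e| * Real.sign (vstar e)) = f := by
    rw [habs]; exact hfeas
  have hval : (1 / 2) * ∑ e, (Real.sign (vstar e)) ^ 2 * |vstar e| * w e
      + (1 / 2) * ∑ e, |vstar e| * w e = ∑ e, |vstar e| * w e := by
    have : ∑ e, (Real.sign (vstar e)) ^ 2 * |vstar e| * w e
        = ∑ e, |vstar e| * w e := by
      apply Finset.sum_congr rfl; intro e _; rw [hsq e]
    rw [this]; ring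
  -- key lower bound
  have key : ∀ μ : Fin m → ℝ, (∀ e, 0 ≤ μ e) → ∀ ξ : Fin m → ℝ,
      A.mulVec (fun e => μ e * ξ e) = f →
      ∑ e, |vstar e| * w e ≤
        (1 / 2) * ∑ e, (ξ e) ^ 2 * μ e * w e + (1 / 2) * ∑ e, μ e * w e := by
    intro μ hμ ξ hξ
    calc ∑ e, |vstar e| * w e ≤ ∑ e, |μ e * ξ e| * w e := hopt _ hξ
      _ ≤ ∑ e, ((1 / 2) * ((ξ e) ^ 2 * μ e * w e) + (1 / 2) * (μ e * w e)) := by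
          apply Finset.sum_le_sum; intro e _
          have h2 : |μ e * ξ e| = μ e * |ξ e| := by
            rw [abs_mul, abs_of_nonneg (hμ e)]
          rw [h2, ← sq_abs (ξ e)]
          nlinarith [mul_nonneg (mul_nonneg (sq_nonneg (|ξ e| - 1)) (hμ e)) (hw e).le,
            sq_abs (ξ e), (hw e).le, hμ e]
      _ = (1 / 2) * ∑ e, (ξ e) ^ 2 * μ e * w e + (1 / 2) * ∑ e, μ e * w e := by
          rw [Finset.sum_add_distrib, ← Finset.mul_sum, ← Finset.mul_sum]
  have hμstar : ∀ e, (0:ℝ) ≤ |vstar e| := fun e => abs_nonneg _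
  have hsumeq : ∑ e, (fun e => |vstar e|) e * w e = ∑ e, |vstar e| * w e := rfl
  -- value of L at μ*
  have hLstar : L (fun e => |vstar e|) = ∑ e, |vstar e| * w e := by
    rw [hLdef]
    have hmem : (1 / 2) * ∑ e, |vstar e| * w e ∈
        {x : ℝ | ∃ ξ : Fin m → ℝ, A.mulVec (fun e => |vstar e| * ξ e) = f ∧
          x = (1 / 2) * ∑ e, (ξ e) ^ 2 * |vstar e| * w e} := by
      refine ⟨fun e => Real.sign (vstar e), hfeas', ?_⟩
      congr 1
      apply Finset.sum_congr rfl; intro e _; rw [hsq e]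
    have hlb : ∀ x ∈ {x : ℝ | ∃ ξ : Fin m → ℝ,
        A.mulVec (fun e => |vstar e| * ξ e) = f ∧
        x = (1 / 2) * ∑ e, (ξ e) ^ 2 * |vstar e| * w e},
        (1 / 2) * ∑ e, |vstar e| * w e ≤ x := by
      rintro x ⟨ξ, hξ, rfl⟩
      have := key (fun e => |vstar e|) hμstar ξ hξ
      linarith
    have : sInf {x : ℝ | ∃ ξ : Fin m → ℝ,
        A.mulVec (fun e => |vstar e| * ξ e) = f ∧
        x = (1 / 2) * ∑ e, (ξ e) ^ 2 * |vstar e| * w e}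
        = (1 / 2) * ∑ e, |vstar e| * w e := by
      apply le_antisymm
      · exact csInf_le ⟨_, hlb⟩ hmem
      · exact le_csInf ⟨_, hmem⟩ hlb
    rw [this]; ring
  refine ⟨hfeas', hval, hLstar, ?_⟩
  intro μ hμ ⟨ξ₀, hξ₀⟩
  rw [hLstar, hLdef]
  have hlb : ∀ x ∈ {x : ℝ | ∃ ξ : Fin m → ℝ,
      A.mulVec (fun e => μ e * ξ e) = f ∧
      x = (1 / 2) * ∑ e, (ξ e) ^ 2 * μ e * w e},
      (∑ e, |vstar e| * w e) - (1 / 2) * ∑ e, μ e * w e ≤ x := by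
    rintro x ⟨ξ, hξ, rfl⟩
    have := key μ hμ ξ hξ
    linarith
  have hne : ∃ x, x ∈ {x : ℝ | ∃ ξ : Fin m → ℝ,
      A.mulVec (fun e => μ e * ξ e) = f ∧
      x = (1 / 2) * ∑ e, (ξ e) ^ 2 * μ e * w e} :=
    ⟨_, ξ₀, hξ₀, rfl⟩
  have := le_csInf hne hlb
  linarith
end
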